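/- arXiv:1209.5402 — 2 statements merged into one kernel-verified Lean document; each statement's English description precedes it below -/
import Mathlib

section
/- For each pair of integers n, k ≥ 1 let S_{n,k} : [0,1) → ℝ be a differentiable non-decreasing function with S_{n,k}(0) ≥ 0. Then the set of r ∈ (0,1) for which S_{n,k}′(r) > (S_{n,k}(r) + 2e)·(log(S_{n,k}(r) + 2e))^{n²+k²+1}·(1−r²)^{−1} holds for some pair (n,k) has finite hyperbolic measure. -/
open MeasureTheory Real Set Filter Topology

/-!
With `m = n² + k²` and `c = 2e`, the function `G = -(m · log (S + c) ^ m)⁻¹` is non-decreasing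
with values in `[-(m · log c ^ m)⁻¹, 0]`, and wherever the growth inequality holds, `G'` exceeds
the hyperbolic density `(1 - r²)⁻¹`. Since the derivative of a monotone function is integrable
with integral at most the increment (Lebesgue), the exceptional set of `(n, k)` has hyperbolic
measure at most `∫ G' ≤ (m · log c ^ m)⁻¹ ≤ (log c)⁻¹ ^ (n + k)`, which is summable over all
pairs because `log c > 1`.
-/

theorem MonotoneOn.deriv_nonneg_of_mem_nhds {g : ℝ → ℝ} {s : Set ℝ} {x : ℝ}
    (hg : MonotoneOn g s) (hs : s ∈ 𝓝 x) : 0 ≤ deriv g x := by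
  rw [← derivWithin_of_mem_nhds hs]
  exact hg.derivWithin_nonneg

theorem MonotoneOn.lintegral_deriv_le_sub {g : ℝ → ℝ} {a b : ℝ} (hab : a ≤ b)
    (hg : MonotoneOn g (Icc a b)) :
    ∫⁻ x in Ioo a b, ENNReal.ofReal (deriv g x) ≤ ENNReal.ofReal (g b - g a) := by
  have hg' : MonotoneOn g (uIcc a b) := by rwa [uIcc_of_le hab]
  have hint : IntegrableOn (deriv g) (Ioo a b) :=
    (intervalIntegrable_iff_integrableOn_Ioo_of_le hab).1 hg'.intervalIntegrable_deriv
  have hnn : 0 ≤ᵐ[volume.restrict (Ioo a b)] deriv g :=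
    (ae_restrict_mem measurableSet_Ioo).mono fun x hx =>
      hg.deriv_nonneg_of_mem_nhds (Icc_mem_nhds hx.1 hx.2)
  have hmem := hg'.intervalIntegral_deriv_mem_uIcc
  rw [uIcc_of_le (sub_nonneg.2 (hg (left_mem_Icc.2 hab) (right_mem_Icc.2 hab) hab)),
    intervalIntegral.integral_of_le hab, integral_Ioc_eq_integral_Ioo] at hmem
  rw [← ofReal_integral_eq_lintegral_ofReal hint hnn]
  exact ENNReal.ofReal_le_ofReal hmem.2

theorem MonotoneOn.lintegral_deriv_Ioo_le {g : ℝ → ℝ} {a b B : ℝ}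
    (hg : MonotoneOn g (Ico a b)) (hB : ∀ x ∈ Ico a b, g x ≤ B) :
    ∫⁻ x in Ioo a b, ENNReal.ofReal (deriv g x) ≤ ENNReal.ofReal (B - g a) := by
  rcases le_or_gt b a with hba | hab
  · simp [Ioo_eq_empty_of_le hba]
  obtain ⟨u, hu_mono, hu_mem, hu_lim⟩ := exists_seq_strictMono_tendsto' hab
  have hunion : Ioo a b = ⋃ n, Ioo a (u n) := by
    ext x
    simp only [mem_iUnion, mem_Ioo]
    refine ⟨fun ⟨hax, hxb⟩ => ?_, fun ⟨n, hax, hxu⟩ => ⟨hax, hxu.trans (hu_mem n).2⟩⟩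
    obtain ⟨n, hn⟩ := (hu_lim.eventually (lt_mem_nhds hxb)).exists
    exact ⟨n, hax, hn⟩
  rw [hunion, setLIntegral_iUnion_of_directed _ (antitone_const.Ioo hu_mono.monotone).directed_le]
  refine iSup_le fun n => ?_
  calc _ ≤ ENNReal.ofReal (g (u n) - g a) :=
        (hg.mono (Icc_subset_Ico_right (hu_mem n).2)).lintegral_deriv_le_sub (hu_mem n).1.le
    _ ≤ ENNReal.ofReal (B - g a) :=
        ENNReal.ofReal_le_ofReal (by linarith [hB _ ⟨(hu_mem n).1.le, (hu_mem n).2⟩])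

theorem withDensity_inter_setOf_lt_le {α : Type*} [MeasurableSpace α] {μ : Measure α} [SFinite μ]
    {w g : α → ℝ} (hg : Measurable g) (s : Set α) :
    (μ.withDensity fun x => ENNReal.ofReal (w x)) (s ∩ {x | w x < g x}) ≤
      ∫⁻ x in s, ENNReal.ofReal (g x) ∂μ := by
  rw [withDensity_apply']
  calc _ ≤ ∫⁻ x in s ∩ {x | w x < g x}, ENNReal.ofReal (g x) ∂μ :=
        setLIntegral_mono hg.ennreal_ofReal fun x hx => ENNReal.ofReal_le_ofReal hx.2.le
    _ ≤ _ := lintegral_mono_set inter_subset_left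

theorem hasDerivAt_neg_inv_mul_log_pow {m : ℕ} (hm : m ≠ 0) {y : ℝ} (hy : y ≠ 0)
    (hlog : log y ≠ 0) :
    HasDerivAt (fun y => -((m : ℝ) * log y ^ m)⁻¹) (y * log y ^ (m + 1))⁻¹ y := by
  obtain ⟨j, rfl⟩ := Nat.exists_eq_succ_of_ne_zero hm
  have h := ((((hasDerivAt_log hy).pow (j + 1)).const_mul ((j + 1 : ℕ) : ℝ)).inv
    (mul_ne_zero (Nat.cast_ne_zero.2 hm) (pow_ne_zero _ hlog))).neg
  refine h.congr_deriv ?_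
  simp only [Nat.add_sub_cancel, Nat.succ_eq_add_one, Pi.pow_apply]
  field_simp
  ring

theorem monotoneOn_neg_inv_mul_log_pow (m : ℕ) :
    MonotoneOn (fun y : ℝ => -((m : ℝ) * log y ^ m)⁻¹) (Ioi 1) := by
  rcases eq_or_ne m 0 with rfl | hm
  · simp [monotoneOn_const]
  intro s hs t _ hst
  have hlog : 0 < log s := log_pos hs
  simp only [neg_le_neg_iff]
  gcongr
  exact zero_lt_one.trans hs

theorem withDensity_setOf_mul_log_pow_mul_lt_deriv_le {f w : ℝ → ℝ} {a b c : ℝ} {m : ℕ}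
    (hm : m ≠ 0) (hf : MonotoneOn f (Ico a b)) (ha : 0 ≤ f a) (hc : 1 < c) :
    (volume.withDensity fun r => ENNReal.ofReal (w r))
        {r | r ∈ Ioo a b ∧ (f r + c) * log (f r + c) ^ (m + 1) * w r < deriv f r}
      ≤ ENNReal.ofReal ((m * log c ^ m)⁻¹) := by
  set F : ℝ → ℝ := fun y => -((m : ℝ) * log y ^ m)⁻¹
  set G : ℝ → ℝ := fun r => F (f r + c)
  have hFmono := monotoneOn_neg_inv_mul_log_pow m
  have hfc : ∀ r ∈ Ico a b, c ≤ f r + c := fun r hr => by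
    linarith [hf ⟨le_rfl, hr.1.trans_lt hr.2⟩ hr hr.1]
  have hlog : ∀ r ∈ Ico a b, 0 < log (f r + c) := fun r hr => log_pos (hc.trans_le (hfc r hr))
  have hGmono : MonotoneOn G (Ico a b) :=
    hFmono.comp (hf.add_const c) fun r hr => hc.trans_le (hfc r hr)
  have hG_nonpos : ∀ r ∈ Ico a b, G r ≤ 0 := fun r hr =>
    neg_nonpos.2 (inv_nonneg.2 (mul_nonneg m.cast_nonneg (pow_nonneg (hlog r hr).le m)))
  have hGa : F c ≤ G a := hFmono hc (show 1 < f a + c by linarith) (by linarith)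
  have hsub : {r | r ∈ Ioo a b ∧ (f r + c) * log (f r + c) ^ (m + 1) * w r < deriv f r} ⊆
      Ioo a b ∩ {r | w r < deriv G r} := by
    rintro r ⟨hr, hlt⟩
    refine ⟨hr, show w r < deriv G r from ?_⟩
    have hr' : r ∈ Ico a b := Ioo_subset_Ico_self hr
    have hpos : 0 < (f r + c) * log (f r + c) ^ (m + 1) :=
      mul_pos (by linarith [hfc r hr']) (pow_pos (hlog r hr') _)
    by_cases hd : DifferentiableAt ℝ f r
    · have hG : HasDerivAt G (((f r + c) * log (f r + c) ^ (m + 1))⁻¹ * deriv f r) r :=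
        HasDerivAt.comp (h₂ := F) r
          (hasDerivAt_neg_inv_mul_log_pow hm (by linarith [hfc r hr']) (hlog r hr').ne')
          (hd.hasDerivAt.add_const c)
      rw [hG.deriv, lt_inv_mul_iff₀ hpos]
      exact hlt
    · -- junk value: `deriv f r = 0`, so the inequality forces `w r < 0 ≤ G' r`
      rw [deriv_zero_of_not_differentiableAt hd] at hlt
      exact (neg_of_mul_neg_right hlt hpos.le).trans_le
        (hGmono.deriv_nonneg_of_mem_nhds (Ico_mem_nhds hr.1 hr.2))
  calc _ ≤ _ := measure_mono hsub
    _ ≤ ∫⁻ r in Ioo a b, ENNReal.ofReal (deriv G r) :=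
        withDensity_inter_setOf_lt_le (measurable_deriv G) _
    _ ≤ ENNReal.ofReal (0 - G a) := hGmono.lintegral_deriv_Ioo_le hG_nonpos
    _ ≤ _ := ENNReal.ofReal_le_ofReal (by simp only [F] at hGa; linarith)

theorem inv_natCast_mul_pow_le_inv_pow {L : ℝ} (hL : 1 ≤ L) {m j : ℕ} (hm : m ≠ 0)
    (hj : j ≤ m) : ((m : ℝ) * L ^ m)⁻¹ ≤ L⁻¹ ^ j := by
  have hL0 : 0 < L := zero_lt_one.trans_le hL
  rw [inv_pow]
  refine inv_anti₀ (by positivity) ?_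
  calc L ^ j ≤ L ^ m := pow_le_pow_right₀ hL hj
    _ ≤ m * L ^ m := le_mul_of_one_le_left (by positivity) (by exact_mod_cast hm.bot_lt)

theorem one_lt_log_two_mul_exp_one : 1 < log (2 * exp 1) := by
  rw [log_mul two_ne_zero (exp_ne_zero 1), log_exp]
  linarith [log_pos one_lt_two]

theorem stmt_1_general (S : ℕ → ℕ → ℝ → ℝ)
    (hmono : ∀ n k : ℕ, 1 ≤ n → 1 ≤ k → MonotoneOn (S n k) (Ico (0:ℝ) 1))
    (h0 : ∀ n k : ℕ, 1 ≤ n → 1 ≤ k → 0 ≤ S n k 0) :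
    (volume.withDensity fun r : ℝ => ENNReal.ofReal ((1 - r ^ 2)⁻¹))
        {r : ℝ | r ∈ Ioo (0:ℝ) 1 ∧
          ∃ n k : ℕ, 1 ≤ n ∧ 1 ≤ k ∧
            (S n k r + 2 * Real.exp 1) *
                (Real.log (S n k r + 2 * Real.exp 1)) ^ (n ^ 2 + k ^ 2 + 1) *
                (1 - r ^ 2)⁻¹ <
              deriv (S n k) r}
      < ⊤ := by
  set μ := volume.withDensity fun r : ℝ => ENNReal.ofReal ((1 - r ^ 2)⁻¹)
  set c := 2 * exp 1
  set T : ℕ → ℕ → Set ℝ := fun n k => {r | r ∈ Ioo (0:ℝ) 1 ∧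
    (S n k r + c) * log (S n k r + c) ^ (n ^ 2 + k ^ 2 + 1) * (1 - r ^ 2)⁻¹ < deriv (S n k) r}
  have hlogc : 1 < log c := one_lt_log_two_mul_exp_one
  have hc : 1 < c := by linarith [add_one_le_exp (1 : ℝ)]
  set q := ENNReal.ofReal (log c)⁻¹
  have hq : q < 1 := ENNReal.ofReal_lt_one.2 (inv_lt_one_of_one_lt₀ hlogc)
  have hT : ∀ n k, μ (T (n + 1) (k + 1)) ≤ q ^ n * q ^ k := fun n k => calc
    μ (T (n + 1) (k + 1)) ≤ _ := withDensity_setOf_mul_log_pow_mul_lt_deriv_le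
        (w := fun r => (1 - r ^ 2)⁻¹) (by positivity) (hmono _ _ (by omega) (by omega))
        (h0 _ _ (by omega) (by omega)) hc
    _ ≤ ENNReal.ofReal ((log c)⁻¹ ^ (n + k)) :=
        ENNReal.ofReal_le_ofReal (inv_natCast_mul_pow_le_inv_pow hlogc.le (by positivity)
          (by nlinarith))
    _ = q ^ n * q ^ k := by
        rw [pow_add, ENNReal.ofReal_mul (by positivity), ENNReal.ofReal_pow (by positivity),
          ENNReal.ofReal_pow (by positivity)]
  have hsub : {r : ℝ | r ∈ Ioo (0:ℝ) 1 ∧ ∃ n k : ℕ, 1 ≤ n ∧ 1 ≤ k ∧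
      (S n k r + c) * log (S n k r + c) ^ (n ^ 2 + k ^ 2 + 1) * (1 - r ^ 2)⁻¹ < deriv (S n k) r}
      ⊆ ⋃ n, ⋃ k, T (n + 1) (k + 1) := by
    rintro r ⟨hr, n, k, hn, hk, hlt⟩
    obtain ⟨n, rfl⟩ := Nat.exists_eq_add_of_le' hn
    obtain ⟨k, rfl⟩ := Nat.exists_eq_add_of_le' hk
    exact mem_iUnion₂.2 ⟨n, k, hr, hlt⟩
  have hgeom : (1 - q)⁻¹ < ⊤ := ENNReal.inv_lt_top.2 (tsub_pos_of_lt hq)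
  calc μ _ ≤ μ (⋃ n, ⋃ k, T (n + 1) (k + 1)) := measure_mono hsub
    _ ≤ ∑' n, ∑' k, μ (T (n + 1) (k + 1)) :=
        (measure_iUnion_le _).trans (ENNReal.tsum_le_tsum fun n => measure_iUnion_le _)
    _ ≤ ∑' n, ∑' k, q ^ n * q ^ k :=
        ENNReal.tsum_le_tsum fun n => ENNReal.tsum_le_tsum (hT n)
    _ = (1 - q)⁻¹ * (1 - q)⁻¹ := by
        simp only [ENNReal.tsum_mul_left, ENNReal.tsum_mul_right, ENNReal.tsum_geometric]
    _ < ⊤ := ENNReal.mul_lt_top hgeom hgeom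

/-- Paper's Claim 2: the doubly indexed Borel–Nevanlinna growth lemma.  The set of radii
where some `S n k` grows faster than `(S+2e)·(log(S+2e))^{n²+k²+1}/(1-r²)` has finite
hyperbolic measure. -/
theorem stmt_1 (S : ℕ → ℕ → ℝ → ℝ)
    (hdiff : ∀ n k : ℕ, 1 ≤ n → 1 ≤ k → ∀ r ∈ Ico (0:ℝ) 1, DifferentiableAt ℝ (S n k) r)
    (hmono : ∀ n k : ℕ, 1 ≤ n → 1 ≤ k → MonotoneOn (S n k) (Ico (0:ℝ) 1))
    (h0 : ∀ n k : ℕ, 1 ≤ n → 1 ≤ k → 0 ≤ S n k 0) :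
    (volume.withDensity fun r : ℝ => ENNReal.ofReal ((1 - r ^ 2)⁻¹))
        {r : ℝ | r ∈ Ioo (0:ℝ) 1 ∧
          ∃ n k : ℕ, 1 ≤ n ∧ 1 ≤ k ∧
            (S n k r + 2 * Real.exp 1) *
                (Real.log (S n k r + 2 * Real.exp 1)) ^ (n ^ 2 + k ^ 2 + 1) *
                (1 - r ^ 2)⁻¹ <
              deriv (S n k) r}
      < ⊤ :=
  stmt_1_general S hmono h0
end

section
/- Let r > 0 and let φ_n : (0,r) → [0,1] be measurable functions converging Lebesgue-almost everywhere to a function φ. Then N_r(φ_n) converges to N_r(φ) uniformly on every compact subset of (0,r), where N_r(ψ)(s) := (log(r/s))^{−1} ∫ₛ^r ψ(t)·t^{−1} dt. -/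
open MeasureTheory Real Set Filter Topology

/-!
On a compact `K ⊆ (0,r)` with `a = min K` and `b = max K`, the weights `(log (r/s))⁻¹`, `s ∈ K`,
are bounded by `(log (r/b))⁻¹`, and every integral over `(s,r)` is dominated by the same integral
over `(a,r)`. Hence `sup_K |N_r(φ_n) - N_r(ψ)| ≤ (log (r/b))⁻¹ ∫ₐ^r |φ_n - ψ| t⁻¹ dt`, which tends
to `0` by dominated convergence with the integrable majorant `t⁻¹` on `(a,r)`.
-/

theorem tendstoUniformlyOn_of_dist_le {ι β α : Type*} [PseudoMetricSpace α] {p : Filter ι}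
    {F : ι → β → α} {f : β → α} {K : Set β} {c : ι → ℝ} (hc : Tendsto c p (𝓝 0))
    (hdist : ∀ n, ∀ s ∈ K, dist (f s) (F n s) ≤ c n) : TendstoUniformlyOn F f p K :=
  Metric.tendstoUniformlyOn_iff.2 fun _ hε =>
    (hc.eventually (gt_mem_nhds hε)).mono fun n hn s hs => (hdist n s hs).trans_lt hn

section Integral

variable {α E : Type*} [MeasurableSpace α] {μ : Measure α} [NormedAddCommGroup E]

theorem norm_setIntegral_sub_le_of_subset [NormedSpace ℝ E] {f g : α → E} {s t : Set α} (hst : s ⊆ t)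
    (hf : IntegrableOn f t μ) (hg : IntegrableOn g t μ) :
    ‖∫ x in s, f x ∂μ - ∫ x in s, g x ∂μ‖ ≤ ∫ x in t, ‖f x - g x‖ ∂μ := by
  rw [← integral_sub (hf.mono_set hst) (hg.mono_set hst)]
  exact (norm_integral_le_integral_norm _).trans <|
    setIntegral_mono_set (hf.sub hg).norm (ae_of_all _ fun _ => norm_nonneg _)
      hst.eventuallyLE

theorem tendsto_integral_norm_sub_of_dominated_convergence {F : ℕ → α → E} {f : α → E}
    (bound : α → ℝ) (F_measurable : ∀ n, AEStronglyMeasurable (F n) μ)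
    (bound_integrable : Integrable bound μ) (h_bound : ∀ n, ∀ᵐ x ∂μ, ‖F n x‖ ≤ bound x)
    (h_lim : ∀ᵐ x ∂μ, Tendsto (fun n => F n x) atTop (𝓝 (f x))) :
    Tendsto (fun n => ∫ x, ‖F n x - f x‖ ∂μ) atTop (𝓝 0) := by
  have f_measurable : AEStronglyMeasurable f μ :=
    aestronglyMeasurable_of_tendsto_ae _ F_measurable h_lim
  have f_bound : ∀ᵐ x ∂μ, ‖f x‖ ≤ bound x := by
    filter_upwards [ae_all_iff.2 h_bound, h_lim] with x hFx hx
    exact le_of_tendsto' hx.norm hFx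
  have h := tendsto_integral_of_dominated_convergence (f := fun _ => (0 : ℝ)) (fun x => 2 * bound x)
    (fun n => ((F_measurable n).sub f_measurable).norm) (bound_integrable.const_mul 2)
    (fun n => by
      filter_upwards [h_bound n, f_bound] with x hFx hfx
      rw [norm_norm, two_mul]
      exact (norm_sub_le _ _).trans (add_le_add hFx hfx))
    (by
      filter_upwards [h_lim] with x hx
      simpa using (hx.sub_const (f x)).norm)
  simpa using h

end Integral

theorem integrableOn_inv_Ioo {a b : ℝ} (ha : 0 < a) : IntegrableOn (fun t : ℝ => t⁻¹) (Ioo a b) :=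
  ((continuousOn_inv₀.mono fun _ hx => (ha.trans_le hx.1).ne').integrableOn_Icc).mono_set
    Ioo_subset_Icc_self

theorem tendsto_integral_norm_mul_inv_sub_mul_inv {a b : ℝ} (ha : 0 < a) {φ : ℕ → ℝ → ℝ}
    {ψ : ℝ → ℝ} (hφ_meas : ∀ n, AEStronglyMeasurable (φ n) (volume.restrict (Ioo a b)))
    (hφ_le : ∀ n, ∀ᵐ t ∂volume.restrict (Ioo a b), ‖φ n t‖ ≤ 1)
    (hconv : ∀ᵐ t ∂volume.restrict (Ioo a b), Tendsto (fun n => φ n t) atTop (𝓝 (ψ t))) :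
    Tendsto (fun n => ∫ t in Ioo a b, ‖φ n t * t⁻¹ - ψ t * t⁻¹‖) atTop (𝓝 0) :=
  tendsto_integral_norm_sub_of_dominated_convergence (fun t => t⁻¹)
    (fun n => (hφ_meas n).mul measurable_inv.aestronglyMeasurable) (integrableOn_inv_Ioo ha)
    (fun n => by
      filter_upwards [hφ_le n, ae_restrict_mem measurableSet_Ioo] with t hφt ht
      rw [norm_mul, norm_inv, Real.norm_of_nonneg (ha.trans ht.1).le]
      exact mul_le_of_le_one_left (inv_nonneg.2 (ha.trans ht.1).le) hφt)
    (hconv.mono fun t ht => ht.mul_const t⁻¹)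

noncomputable def nevanlinnaTransform (r : ℝ) (ψ : ℝ → ℝ) (s : ℝ) : ℝ :=
  (Real.log (r / s))⁻¹ * ∫ t in Ioo s r, ψ t * t⁻¹

theorem dist_nevanlinnaTransform_le {r a b s : ℝ} {f g : ℝ → ℝ} (hs : 0 < s) (has : a ≤ s)
    (hsb : s ≤ b) (hbr : b < r) (hf : IntegrableOn (fun t => f t * t⁻¹) (Ioo a r))
    (hg : IntegrableOn (fun t => g t * t⁻¹) (Ioo a r)) :
    dist (nevanlinnaTransform r f s) (nevanlinnaTransform r g s) ≤
      (Real.log (r / b))⁻¹ * ∫ t in Ioo a r, ‖f t * t⁻¹ - g t * t⁻¹‖ := by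
  have hlog_b : 0 < Real.log (r / b) :=
    Real.log_pos ((one_lt_div (hs.trans_le hsb)).2 hbr)
  have hlog_s : Real.log (r / b) ≤ Real.log (r / s) :=
    Real.log_le_log (div_pos (hs.trans (hsb.trans_lt hbr)) (hs.trans_le hsb))
      (div_le_div_of_nonneg_left (hs.trans (hsb.trans_lt hbr)).le hs hsb)
  rw [nevanlinnaTransform, nevanlinnaTransform, dist_eq_norm, ← mul_sub, norm_mul, norm_inv,
    Real.norm_of_nonneg (hlog_b.trans_le hlog_s).le]
  exact mul_le_mul (inv_anti₀ hlog_b hlog_s)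
    (norm_setIntegral_sub_le_of_subset (Ioo_subset_Ioo_left has) hf hg) (norm_nonneg _)
    (inv_nonneg.2 hlog_b.le)

theorem stmt_4_general (r : ℝ) (φ : ℕ → ℝ → ℝ) (ψ : ℝ → ℝ)
    (hmeas : ∀ n, Measurable (φ n))
    (hrange : ∀ n, ∀ t ∈ Ioo (0:ℝ) r, φ n t ∈ Icc (0:ℝ) 1)
    (hconv : ∀ᵐ t ∂(volume.restrict (Ioo (0:ℝ) r)),
      Tendsto (fun n => φ n t) atTop (nhds (ψ t))) :
    ∀ K : Set ℝ, K ⊆ Ioo (0:ℝ) r → IsCompact K →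
      TendstoUniformlyOn
        (fun n s => (Real.log (r / s))⁻¹ * ∫ t in Ioo s r, φ n t * t⁻¹)
        (fun s => (Real.log (r / s))⁻¹ * ∫ t in Ioo s r, ψ t * t⁻¹)
        atTop K := by
  intro K hK hKc
  rcases K.eq_empty_or_nonempty with rfl | hne
  · exact tendstoUniformlyOn_empty
  obtain ⟨a, haK, ha_min⟩ := hKc.exists_isLeast hne
  obtain ⟨b, hbK, hb_max⟩ := hKc.exists_isGreatest hne
  have ha : 0 < a := (hK haK).1
  have hsub : Ioo a r ⊆ Ioo 0 r := Ioo_subset_Ioo_left ha.le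
  have hconv' := ae_restrict_of_ae_restrict_of_subset hsub hconv
  have hφ_le : ∀ n, ∀ᵐ t ∂volume.restrict (Ioo a r), ‖φ n t‖ ≤ 1 := fun n =>
    (ae_restrict_mem measurableSet_Ioo).mono fun t ht =>
      abs_le.2 ⟨by linarith [(hrange n t (hsub ht)).1], (hrange n t (hsub ht)).2⟩
  have hψ_le : ∀ᵐ t ∂volume.restrict (Ioo a r), ‖ψ t‖ ≤ 1 := by
    filter_upwards [ae_all_iff.2 hφ_le, hconv'] with t hφt ht
    exact le_of_tendsto' ht.norm hφt
  have hψ_meas : AEStronglyMeasurable ψ (volume.restrict (Ioo a r)) :=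
    aestronglyMeasurable_of_tendsto_ae _ (fun n => (hmeas n).aestronglyMeasurable) hconv'
  have hφ_int n : IntegrableOn (fun t => φ n t * t⁻¹) (Ioo a r) :=
    (integrableOn_inv_Ioo ha).bdd_mul (hmeas n).aestronglyMeasurable (hφ_le n)
  have hψ_int : IntegrableOn (fun t => ψ t * t⁻¹) (Ioo a r) :=
    (integrableOn_inv_Ioo ha).bdd_mul hψ_meas hψ_le
  have hlim := tendsto_integral_norm_mul_inv_sub_mul_inv ha
    (fun n => (hmeas n).aestronglyMeasurable) hφ_le hconv'
  refine tendstoUniformlyOn_of_dist_le (by simpa using hlim.const_mul (Real.log (r / b))⁻¹)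
    fun n s hs => ?_
  rw [dist_comm]
  exact dist_nevanlinnaTransform_le (hK hs).1 (ha_min hs) (hb_max hs) (hK hbK).2 (hφ_int n) hψ_int

/-- Part (b) of the paper's Lemma on Lebesgue derivatives: if measurable functions
`φ_n : (0,r) → [0,1]` converge Lebesgue-a.e. to `φ`, then the Nevanlinna transforms
`N_r(φ_n)(s) = (log(r/s))⁻¹ ∫ₛ^r φ_n(t)/t dt` converge to `N_r(φ)` uniformly on
compact subsets of `(0,r)`. -/
theorem stmt_4 (r : ℝ) (hr : 0 < r) (φ : ℕ → ℝ → ℝ) (ψ : ℝ → ℝ)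
    (hmeas : ∀ n, Measurable (φ n))
    (hrange : ∀ n, ∀ t ∈ Ioo (0:ℝ) r, φ n t ∈ Icc (0:ℝ) 1)
    (hconv : ∀ᵐ t ∂(volume.restrict (Ioo (0:ℝ) r)),
      Tendsto (fun n => φ n t) atTop (nhds (ψ t))) :
    ∀ K : Set ℝ, K ⊆ Ioo (0:ℝ) r → IsCompact K →
      TendstoUniformlyOn
        (fun n s => (Real.log (r / s))⁻¹ * ∫ t in Ioo s r, φ n t * t⁻¹)
        (fun s => (Real.log (r / s))⁻¹ * ∫ t in Ioo s r, ψ t * t⁻¹)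
        atTop K :=
  stmt_4_general r φ ψ hmeas hrange hconv
end
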